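/- Let A ∈ ℤ^{m×n} and W ∈ ℤ^{k×n}, and suppose the (m+k)×(n+m) block matrix M = [[A, I_m],[W, 0_{k×m}]] has rank m+k and is unimodular. Then for every b ∈ ℤ^m, the set conv({x ∈ ℝ^n : Ax ≤ b, Wx ∈ ℤ^k, x ≥ 0}) is an integral polyhedron. -/

import Mathlib

open Matrix Set

/-- A point of `ℝⁿ` is integral if all its coordinates are integers. -/
def IsIntegerPoint {n : ℕ} (x : Fin n → ℝ) : Prop := ∀ i, ∃ z : ℤ, x i = (z : ℝ)

/-- An integral matrix of full row rank is unimodular if each of its nonsingular maximal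
square submatrices has determinant `±1`. -/
def IsUnimodularRect {r s : Type*} [Fintype r] [DecidableEq r]
    (M : Matrix r s ℤ) : Prop :=
  ∀ g : r → s, Function.Injective g →
    (M.submatrix id g).det ≠ 0 → (M.submatrix id g).det = 1 ∨ (M.submatrix id g).det = -1

/-!
Fix `x` in the set and lift it to `v = (x, b - A x)`, so that `M v = (b, W x)` has an integral
right-hand side and `v ≥ 0`. The polytope `{w : M w = (b, W x), ⌊v⌋ ≤ w ≤ ⌈v⌉}` contains `v`,
and its vertices are integral: at a vertex, the columns of `M` at the coordinates strictly
between their bounds are linearly independent, so by full row rank they extend to a nonsingular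
maximal square submatrix, which has determinant `±1`; the other coordinates sit at integral
bounds, and Cramer's rule makes the remaining ones integral. By Krein–Milman `v` is a convex
combination of integral points of the polytope, and these project into the set because
`⌊v⌋ ≥ 0`.
-/

open Filter Topology Function

def integerPoints (s : Type*) : Set (s → ℝ) := {w | ∀ j, ∃ z : ℤ, w j = z}

def boxPolytope {r s : Type*} [Fintype s] (M : Matrix r s ℝ) (c : r → ℝ) (L U : s → ℝ) :
    Set (s → ℝ) :=
  {w | M *ᵥ w = c} ∩ Icc L U

theorem Matrix.mulVec_eq_submatrix_mulVec {r s t R : Type*} [Fintype s] [Fintype t]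
    [NonUnitalNonAssocSemiring R] (M : Matrix r s R) {g : t → s} (hg : Injective g) {v : s → R}
    (hv : ∀ j ∉ range g, v j = 0) : M *ᵥ v = M.submatrix id g *ᵥ (v ∘ g) := by
  ext i
  exact (Fintype.sum_of_injective g hg _ _ (fun j hj => by simp [hv j hj]) fun _ => rfl).symm

theorem Matrix.exists_submatrix_det_ne_zero_of_linearIndepOn {K r s : Type*} [Field K]
    [Fintype r] [DecidableEq r] [Fintype s] {M : Matrix r s K} (hM : M.rank = Fintype.card r)
    {F : Set s} (hF : LinearIndepOn K M.col F) :
    ∃ g : r → s, Injective g ∧ F ⊆ range g ∧ (M.submatrix id g).det ≠ 0 := by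
  classical
  set G := hF.extend (subset_univ F)
  have hG : LinearIndependent K (fun j : G => M.col j) := hF.linearIndepOn_extend _
  have hcard : Fintype.card r = Fintype.card G := by
    rw [← hM, rank_eq_finrank_span_cols, ← image_univ, ← hF.span_image_extend_eq_span_image,
      ← finrank_span_eq_card hG, image_eq_range]
  let e : r ≃ G := Fintype.equivOfCardEq hcard
  refine ⟨Subtype.val ∘ e, Subtype.val_injective.comp e.injective, fun j hj => ?_, ?_⟩
  · exact ⟨e.symm ⟨j, hF.subset_extend _ hj⟩, by simp⟩
  · rw [← isUnit_iff_ne_zero, ← isUnit_iff_isUnit_det, ← linearIndependent_cols_iff_isUnit]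
    exact hG.comp e e.injective

section Integrality

variable {r s : Type*} [Fintype r] [DecidableEq r] [Fintype s]

theorem mem_integerPoints_of_isUnit_det {B : Matrix r r ℤ} (hB : IsUnit B.det) {v : r → ℝ}
    (hv : B.map (Int.cast : ℤ → ℝ) *ᵥ v ∈ integerPoints r) : v ∈ integerPoints r := by
  choose c hc using hv
  have hinv : (B⁻¹).map (Int.cast : ℤ → ℝ) * B.map Int.cast = 1 := by
    have := congrArg (Int.castRingHom ℝ).mapMatrix (nonsing_inv_mul B hB)
    rwa [map_mul, map_one] at this
  have : v = Int.cast ∘ (B⁻¹ *ᵥ c) := by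
    rw [← one_mulVec v, ← hinv, ← mulVec_mulVec, funext hc]
    ext i
    exact ((Int.castRingHom ℝ).map_mulVec _ _ i).symm
  exact fun i => ⟨_, congrFun this i⟩

theorem mem_integerPoints_of_submatrix {M : Matrix r s ℤ} {g : r → s} (hg : Injective g)
    (hdet : IsUnit (M.submatrix id g).det) {w : s → ℝ}
    (hw : M.map (Int.cast : ℤ → ℝ) *ᵥ w ∈ integerPoints r)
    (hout : ∀ j ∉ range g, ∃ z : ℤ, w j = z) : w ∈ integerPoints s := by
  classical
  choose c hc using hw
  -- `u` agrees with `w` on `range g` and vanishes elsewhere, so only the square block acts on it.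
  let q : s → ℤ := fun j => if j ∈ range g then 0 else ⌊w j⌋
  let u : s → ℝ := w - Int.cast ∘ q
  have hu : ∀ j ∉ range g, u j = 0 := fun j hj => by
    obtain ⟨z, hz⟩ := hout j hj
    simp only [u, q, Pi.sub_apply, Function.comp_apply, if_neg hj, hz, Int.floor_intCast,
      sub_self]
  have hug : u ∘ g = w ∘ g := by ext i; simp [u, q]
  have hint : u ∘ g ∈ integerPoints r := by
    refine mem_integerPoints_of_isUnit_det hdet fun i => ⟨c i - (M *ᵥ q) i, ?_⟩
    rw [← submatrix_map, ← mulVec_eq_submatrix_mulVec _ hg hu, mulVec_sub, Pi.sub_apply, hc,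
      Int.cast_sub]
    exact congrArg _ ((Int.castRingHom ℝ).map_mulVec M q i).symm
  intro j
  by_cases hj : j ∈ range g
  · obtain ⟨i, rfl⟩ := hj
    obtain ⟨z, hz⟩ := hint i
    exact ⟨z, (congrFun hug i).symm.trans hz⟩
  · exact hout j hj

end Integrality

theorem eq_zero_of_mem_extremePoints {E : Type*} [AddCommGroup E] [Module ℝ E] {A : Set E}
    {z d : E} (hz : z ∈ A.extremePoints ℝ) (hd : ∀ᶠ ε in 𝓝 (0 : ℝ), z + ε • d ∈ A) :
    d = 0 := by
  obtain ⟨δ, hδ, hball⟩ := Metric.eventually_nhds_iff.mp hd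
  have hmem : ∀ ε, |ε| < δ → z + ε • d ∈ A := fun ε hε => hball (by simpa using hε)
  have hε : |δ / 2| < δ := by rw [abs_of_pos (half_pos hδ)]; exact half_lt_self hδ
  have hseg : z ∈ openSegment ℝ (z + (-(δ / 2)) • d) (z + (δ / 2) • d) :=
    ⟨1 / 2, 1 / 2, by norm_num, by norm_num, by norm_num, by module⟩
  have h := hz.2 (hmem _ (by rwa [abs_neg])) (hmem _ hε) hseg
  rw [add_eq_left, smul_eq_zero] at h
  exact h.resolve_left (neg_ne_zero.mpr (half_pos hδ).ne')

theorem eventually_add_smul_mem_Icc {s : Type*} [Finite s] {L U z d : s → ℝ}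
    (hz : z ∈ Icc L U) (hd : ∀ j, d j ≠ 0 → L j < z j ∧ z j < U j) :
    ∀ᶠ ε in 𝓝 (0 : ℝ), z + ε • d ∈ Icc L U := by
  simp only [mem_Icc, Pi.le_def, ← forall_and]
  rw [eventually_all]
  intro j
  by_cases hdj : d j = 0
  · exact .of_forall fun ε => by simpa [hdj] using And.intro (hz.1 j) (hz.2 j)
  · have hcont : Tendsto (fun ε : ℝ => z j + ε * d j) (𝓝 0) (𝓝 (z j)) :=
      (continuous_const.add (continuous_id.mul continuous_const)).tendsto' _ _ (by simp)
    filter_upwards [hcont (Ioo_mem_nhds (hd j hdj).1 (hd j hdj).2)] with ε hε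
    exact ⟨hε.1.le, hε.2.le⟩

theorem linearIndepOn_col_of_mem_extremePoints {r s : Type*} [Fintype s]
    {M : Matrix r s ℝ} {c : r → ℝ} {L U z : s → ℝ}
    (hz : z ∈ (boxPolytope M c L U).extremePoints ℝ) :
    LinearIndepOn ℝ M.col {j | L j < z j ∧ z j < U j} := by
  rw [linearIndepOn_iff]
  intro l hl hl0
  have hMl : M *ᵥ l = 0 := by
    rw [← hl0]
    ext i
    simp [mulVec, dotProduct, Finsupp.linearCombination_apply, Finsupp.sum_fintype, mul_comm]
  have hd : ∀ᶠ ε in 𝓝 (0 : ℝ), z + ε • ⇑l ∈ boxPolytope M c L U := by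
    filter_upwards [eventually_add_smul_mem_Icc hz.1.2 fun j hj =>
      by_contra fun h => hj ((Finsupp.mem_supported' _ _).mp hl j h)] with ε hε
    have hzc : M *ᵥ z = c := hz.1.1
    exact ⟨by simp [mulVec_add, mulVec_smul, hMl, hzc], hε⟩
  exact DFunLike.coe_injective (eq_zero_of_mem_extremePoints hz hd)

section Polytope

variable {r s : Type*} [Fintype r] [DecidableEq r] [Fintype s]

theorem mem_integerPoints_of_mem_extremePoints {M : Matrix r s ℤ}
    (hrank : (M.map (Int.cast : ℤ → ℚ)).rank = Fintype.card r) (hM : IsUnimodularRect M)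
    {c : r → ℤ} {L U : s → ℤ} {w : s → ℝ}
    (hw : w ∈ (boxPolytope (M.map Int.cast) (Int.cast ∘ c) (Int.cast ∘ L)
      (Int.cast ∘ U)).extremePoints ℝ) :
    w ∈ integerPoints s := by
  set F := {j | (L j : ℝ) < w j ∧ w j < U j}
  have hFℝ : LinearIndepOn ℝ (M.map (Int.cast : ℤ → ℝ)).col F :=
    linearIndepOn_col_of_mem_extremePoints hw
  have hFℚ : LinearIndepOn ℚ (M.map (Int.cast : ℤ → ℚ)).col F := by
    refine LinearIndependent.of_comp ((Algebra.linearMap ℚ ℝ).compLeft r) ?_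
    convert hFℝ.restrict_scalars' ℚ using 1
    ext
    simp
  obtain ⟨g, hg, hFg, hdet⟩ := exists_submatrix_det_ne_zero_of_linearIndepOn hrank hFℚ
  have hunit : IsUnit (M.submatrix id g).det := by
    refine Int.isUnit_iff.mpr (hM g hg fun h => hdet ?_)
    rw [submatrix_map, ← Int.cast_det, h, Int.cast_zero]
  refine mem_integerPoints_of_submatrix hg hunit (fun i => ⟨c i, congrFun hw.1.1 i⟩)
    fun j hj => ?_
  by_cases hL : w j = L j
  · exact ⟨L j, hL⟩
  · refine ⟨U j, le_antisymm (hw.1.2.2 j) (not_lt.mp fun hU => hj (hFg ⟨?_, hU⟩))⟩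
    exact lt_of_le_of_ne (hw.1.2.1 j) (Ne.symm hL)

theorem finite_Icc_inter_integerPoints [DecidableEq s] (L U : s → ℤ) :
    (Icc (Int.cast ∘ L : s → ℝ) (Int.cast ∘ U) ∩ integerPoints s).Finite := by
  refine ((finite_Icc L U).image fun z => (Int.cast ∘ z : s → ℝ)).subset ?_
  rintro w ⟨⟨hL, hU⟩, hw⟩
  choose z hz using hw
  refine ⟨z, ⟨fun j => ?_, fun j => ?_⟩, funext fun j => (hz j).symm⟩
  · simpa [hz j] using hL j
  · simpa [hz j] using hU j

theorem boxPolytope_subset_convexHull_integerPoints {M : Matrix r s ℤ}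
    (hrank : (M.map (Int.cast : ℤ → ℚ)).rank = Fintype.card r) (hM : IsUnimodularRect M)
    (c : r → ℤ) (L U : s → ℤ) :
    boxPolytope (M.map Int.cast) (Int.cast ∘ c) (Int.cast ∘ L) (Int.cast ∘ U) ⊆
      convexHull ℝ (boxPolytope (M.map Int.cast) (Int.cast ∘ c) (Int.cast ∘ L) (Int.cast ∘ U) ∩
        integerPoints s) := by
  classical
  set P := boxPolytope (M.map Int.cast) (Int.cast ∘ c) (Int.cast ∘ L) (Int.cast ∘ U)
  have hcompact : IsCompact P :=
    isCompact_Icc.inter_left (isClosed_eq (continuous_const.matrix_mulVec continuous_id)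
      continuous_const)
  have hconvex : Convex ℝ P :=
    ((convex_singleton _).linear_preimage (M.map Int.cast).mulVecLin).inter (convex_Icc _ _)
  have hfinite : (P ∩ integerPoints s).Finite :=
    (finite_Icc_inter_integerPoints L U).subset (inter_subset_inter_left _ inter_subset_right)
  calc P = closure (convexHull ℝ (P.extremePoints ℝ)) :=
        (closure_convexHull_extremePoints hcompact hconvex).symm
    _ ⊆ closure (convexHull ℝ (P ∩ integerPoints s)) :=
        closure_mono <| convexHull_mono fun w hw =>
          ⟨hw.1, mem_integerPoints_of_mem_extremePoints hrank hM hw⟩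
    _ = convexHull ℝ (P ∩ integerPoints s) :=
        (hfinite.isCompact_convexHull ℝ).isClosed.closure_eq

end Polytope

section MixedInteger

variable {ι κ ν : Type*} [Fintype ι] [DecidableEq ι] [Fintype ν]

def mixedIntegerSet (A : Matrix ι ν ℤ) (W : Matrix κ ν ℤ) (b : ι → ℤ) : Set (ν → ℝ) :=
  {x | (∀ i, (A.map (Int.cast : ℤ → ℝ)).mulVec x i ≤ (b i : ℝ)) ∧
    (∀ j, ∃ z : ℤ, (W.map (Int.cast : ℤ → ℝ)).mulVec x j = (z : ℝ)) ∧ (∀ i, 0 ≤ x i)}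

theorem fromBlocks_one_zero_mulVec (A : Matrix ι ν ℤ) (W : Matrix κ ν ℤ) (v : ν ⊕ ι → ℝ) :
    (fromBlocks A (1 : Matrix ι ι ℤ) W 0).map (Int.cast : ℤ → ℝ) *ᵥ v =
      Sum.elim (A.map Int.cast *ᵥ (v ∘ Sum.inl) + v ∘ Sum.inr)
        (W.map Int.cast *ᵥ (v ∘ Sum.inl)) := by
  simp [fromBlocks_map, fromBlocks_mulVec]

variable [Fintype κ] [DecidableEq κ]

theorem mixedIntegerSet_subset_convexHull_integerPoints {A : Matrix ι ν ℤ} {W : Matrix κ ν ℤ}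
    (hrank : ((fromBlocks A (1 : Matrix ι ι ℤ) W 0).map (Int.cast : ℤ → ℚ)).rank =
      Fintype.card (ι ⊕ κ))
    (hM : IsUnimodularRect (fromBlocks A (1 : Matrix ι ι ℤ) W 0)) (b : ι → ℤ) :
    mixedIntegerSet A W b ⊆ convexHull ℝ (mixedIntegerSet A W b ∩ integerPoints ν) := by
  rintro x ⟨hA, hW, hx0⟩
  choose y hy using hW
  let v : ν ⊕ ι → ℝ := Sum.elim x fun i => b i - (A.map Int.cast *ᵥ x) i
  have hv0 : ∀ j, (0 : ℤ) ≤ ⌊v j⌋ := fun j => Int.floor_nonneg.mpr <| by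
    rcases j with j | i
    exacts [hx0 j, sub_nonneg.mpr (hA i)]
  set P := boxPolytope ((fromBlocks A (1 : Matrix ι ι ℤ) W 0).map Int.cast)
    (Int.cast ∘ Sum.elim b y) (Int.cast ∘ fun j => ⌊v j⌋) (Int.cast ∘ fun j => ⌈v j⌉)
  have hvP : v ∈ P := by
    refine ⟨?_, fun j => Int.floor_le (v j), fun j => Int.le_ceil (v j)⟩
    ext (i | j) <;> simp [fromBlocks_one_zero_mulVec, v, hy]
  have hproj : LinearMap.funLeft ℝ ℝ Sum.inl '' (P ∩ integerPoints (ν ⊕ ι)) ⊆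
      mixedIntegerSet A W b ∩ integerPoints ν := by
    rintro _ ⟨w, ⟨⟨hMw, hLw, -⟩, hw⟩, rfl⟩
    change w ∘ Sum.inl ∈ mixedIntegerSet A W b ∩ integerPoints ν
    have hw0 : ∀ j, 0 ≤ w j := fun j => le_trans (by simpa using hv0 j) (hLw j)
    have hMw := congrFun hMw
    simp only [fromBlocks_one_zero_mulVec] at hMw
    refine ⟨⟨fun i => ?_, fun j => ⟨y j, by simpa using hMw (.inr j)⟩, fun j => hw0 (.inl j)⟩,
      fun j => hw _⟩
    have := hMw (.inl i)
    simp only [Sum.elim_inl, Pi.add_apply, Function.comp_apply] at this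
    linarith [hw0 (.inr i)]
  refine convexHull_mono hproj ?_
  rw [← LinearMap.image_convexHull]
  exact mem_image_of_mem _ (boxPolytope_subset_convexHull_integerPoints hrank hM _ _ _ hvP)

end MixedInteger

/-- **If `[[A, I],[W, 0]]` has full row rank and is unimodular, then for each integral `b`,
`conv {x ≥ 0 : A x ≤ b, W x ∈ ℤᵏ}` is an integral polyhedron.** -/
theorem block_unimodular_implies_mixed_integer_hull_integral
    {m n k : ℕ} (A : Matrix (Fin m) (Fin n) ℤ) (W : Matrix (Fin k) (Fin n) ℤ)
    (hrank : ((Matrix.fromBlocks A (1 : Matrix (Fin m) (Fin m) ℤ) W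
        (0 : Matrix (Fin k) (Fin m) ℤ)).map (Int.cast : ℤ → ℚ)).rank = m + k)
    (hunimod : IsUnimodularRect (Matrix.fromBlocks A (1 : Matrix (Fin m) (Fin m) ℤ) W
        (0 : Matrix (Fin k) (Fin m) ℤ)))
    (b : Fin m → ℤ) :
    convexHull ℝ {x : Fin n → ℝ |
        (∀ i, (A.map (Int.cast : ℤ → ℝ)).mulVec x i ≤ (b i : ℝ)) ∧
        (∀ j, ∃ z : ℤ, (W.map (Int.cast : ℤ → ℝ)).mulVec x j = (z : ℝ)) ∧
        (∀ i, 0 ≤ x i)}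
      = convexHull ℝ ((convexHull ℝ {x : Fin n → ℝ |
        (∀ i, (A.map (Int.cast : ℤ → ℝ)).mulVec x i ≤ (b i : ℝ)) ∧
        (∀ j, ∃ z : ℤ, (W.map (Int.cast : ℤ → ℝ)).mulVec x j = (z : ℝ)) ∧
        (∀ i, 0 ≤ x i)}) ∩ {x | IsIntegerPoint x}) := by
  have hS := mixedIntegerSet_subset_convexHull_integerPoints (by simpa using hrank) hunimod b
  refine le_antisymm (convexHull_min (fun x hx => ?_) (convex_convexHull ℝ _))
    (convexHull_min inter_subset_left (convex_convexHull ℝ _))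
  exact convexHull_mono (inter_subset_inter_left _ (subset_convexHull ℝ _)) (hS hx)
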